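/- arXiv:1802.02017 — 2 statements merged into one kernel-verified Lean document; each statement's English description precedes it below -/
import Mathlib

section
/- Let χ: 𝔊₁ → 𝔊₂ be a hypercover of crossed modules of groupoids over a common object space X (i.e., the induced strict homomorphism of associated 2-groupoids is a weak equivalence). Then in the associated crossing M = H₂ ⋊_χ G₁, the sequence H₁ —α₁→ M —β₂→ G₂ is exact: α₁(h₁) = (χ(h₁⁻¹), ∂₁(h₁)) is injective, β₂(h₂,g₁) = ∂₂(h₂)χ(g₁), and two elements of M have the same image under β₂ if and only if they differ by left multiplication by an element of α₁(H₁). Hence M is a crossed extension of 𝔊₁ and 𝔊₂. -/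
/-- A groupoid with object space `X`.  Composition is written in "paper
order": `comp g h` is defined when the source of `g` equals the target of
`h`; here `Hom x y` is the set of arrows with source `x` and target `y`, so
for `g : Hom y z` and `h : Hom x y` we have `comp g h : Hom x z`
("first `h`, then `g`"). -/
structure GpdOver (X : Type) where
  Hom : X → X → Type
  id : ∀ x, Hom x x
  comp : ∀ {x y z : X}, Hom y z → Hom x y → Hom x z
  inv : ∀ {x y : X}, Hom x y → Hom y x
  comp_assoc : ∀ {x y z w : X} (g : Hom z w) (h : Hom y z) (k : Hom x y),
    comp (comp g h) k = comp g (comp h k)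
  id_comp : ∀ {x y : X} (g : Hom x y), comp (id y) g = g
  comp_id : ∀ {x y : X} (g : Hom x y), comp g (id x) = g
  comp_inv : ∀ {x y : X} (g : Hom x y), comp g (inv g) = id y
  inv_comp : ∀ {x y : X} (g : Hom x y), comp (inv g) g = id x

/-- A crossed module of groupoids over the object space `X`: a groupoid `G`
over `X`, a bundle of groups `H` over `X`, a morphism `δ : H → G` over the
identity of `X` (landing in loops), and an action `act` of `G` on `H` by
group isomorphisms (`act g : H y → H x` for `g : Hom x y`), satisfying
`δ (act g a) = g⁻¹ · δ a · g` and `act (δ a) b = a⁻¹ b a`. -/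
structure XMod (X : Type) where
  G : GpdOver X
  H : X → Type
  mul : ∀ {x : X}, H x → H x → H x
  one : ∀ x : X, H x
  hinv : ∀ {x : X}, H x → H x
  mul_assoc : ∀ {x : X} (a b c : H x), mul (mul a b) c = mul a (mul b c)
  one_mul : ∀ {x : X} (a : H x), mul (one x) a = a
  mul_one : ∀ {x : X} (a : H x), mul a (one x) = a
  inv_mul : ∀ {x : X} (a : H x), mul (hinv a) a = one x
  mul_inv : ∀ {x : X} (a : H x), mul a (hinv a) = one x
  δ : ∀ {x : X}, H x → G.Hom x x
  δ_mul : ∀ {x : X} (a b : H x), δ (mul a b) = G.comp (δ a) (δ b)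
  δ_one : ∀ x : X, δ (one x) = G.id x
  act : ∀ {x y : X}, G.Hom x y → H y → H x
  act_id : ∀ {x : X} (a : H x), act (G.id x) a = a
  act_comp : ∀ {x y z : X} (g : G.Hom y z) (h : G.Hom x y) (a : H z),
    act (G.comp g h) a = act h (act g a)
  act_mul : ∀ {x y : X} (g : G.Hom x y) (a b : H y),
    act g (mul a b) = mul (act g a) (act g b)
  act_one : ∀ {x y : X} (g : G.Hom x y), act g (one y) = one x
  δ_act : ∀ {x y : X} (g : G.Hom x y) (a : H y),
    δ (act g a) = G.comp (G.inv g) (G.comp (δ a) g)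
  act_δ : ∀ {x : X} (a b : H x), act (δ a) b = mul (hinv a) (mul b a)

/-- A strict morphism of groupoids over the same object space `X`. -/
structure GpdHom {X : Type} (M N : GpdOver X) where
  map : ∀ {x y : X}, M.Hom x y → N.Hom x y
  map_comp : ∀ {x y z : X} (g : M.Hom y z) (h : M.Hom x y),
    map (M.comp g h) = N.comp (map g) (map h)
  map_id : ∀ x : X, map (M.id x) = N.id x
  map_inv : ∀ {x y : X} (g : M.Hom x y), map (M.inv g) = N.inv (map g)

/-- A strict morphism of crossed modules of groupoids over the same object
space `X`. -/
structure XModHom {X : Type} (A B : XMod X) where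
  mapH : ∀ {x : X}, A.H x → B.H x
  mapG : ∀ {x y : X}, A.G.Hom x y → B.G.Hom x y
  mapH_mul : ∀ {x : X} (a b : A.H x), mapH (A.mul a b) = B.mul (mapH a) (mapH b)
  mapG_comp : ∀ {x y z : X} (g : A.G.Hom y z) (h : A.G.Hom x y),
    mapG (A.G.comp g h) = B.G.comp (mapG g) (mapG h)
  mapG_id : ∀ x : X, mapG (A.G.id x) = B.G.id x
  comm : ∀ {x : X} (a : A.H x), B.δ (mapH a) = mapG (A.δ a)
  equivar : ∀ {x y : X} (g : A.G.Hom x y) (a : A.H y),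
    mapH (A.act g a) = B.act (mapG g) (mapH a)

/-- A crossing from the crossed module `A` to the crossed module `B`
(both over the same object space `X`, with trivial anchor maps):
a groupoid `M` over `X` together with morphisms `α₁ : H₁ → M`,
`α₂ : M → G₁`, `β₁ : H₂ → M`, `β₂ : M → G₂` (all the identity on objects),
such that `α₂∘α₁ = ∂₁`, `β₂∘β₁ = ∂₂`, the diagonals are complexes,
`H₂ → M → G₁` is an extension of groupoids, and the conjugation identities
hold. -/
structure Crossing {X : Type} (A B : XMod X) where
  M : GpdOver X
  α₁ : ∀ {x : X}, A.H x → M.Hom x x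
  α₂ : GpdHom M A.G
  β₁ : ∀ {x : X}, B.H x → M.Hom x x
  β₂ : GpdHom M B.G
  α₁_mul : ∀ {x : X} (a b : A.H x), α₁ (A.mul a b) = M.comp (α₁ a) (α₁ b)
  β₁_mul : ∀ {x : X} (a b : B.H x), β₁ (B.mul a b) = M.comp (β₁ a) (β₁ b)
  tri₁ : ∀ {x : X} (a : A.H x), α₂.map (α₁ a) = A.δ a
  tri₂ : ∀ {x : X} (b : B.H x), β₂.map (β₁ b) = B.δ b
  diag₁ : ∀ {x : X} (a : A.H x), β₂.map (α₁ a) = B.G.id x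
  diag₂ : ∀ {x : X} (b : B.H x), α₂.map (β₁ b) = A.G.id x
  β₁_inj : ∀ {x : X} (b b' : B.H x), β₁ b = β₁ b' → b = b'
  α₂_surj : ∀ {x y : X} (g : A.G.Hom x y), ∃ m : M.Hom x y, α₂.map m = g
  exact₁ : ∀ {x : X} (m : M.Hom x x), α₂.map m = A.G.id x → ∃ b : B.H x, β₁ b = m
  conj₁ : ∀ {x y : X} (m : M.Hom x y) (a : A.H y),
    α₁ (A.act (α₂.map m) a) = M.comp (M.inv m) (M.comp (α₁ a) m)
  conj₂ : ∀ {x y : X} (m : M.Hom x y) (b : B.H y),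
    β₁ (B.act (β₂.map m) b) = M.comp (M.inv m) (M.comp (β₁ b) m)

/-- A crossed extension of `A` and `B`: a crossing for which the other
diagonal `H₁ → M → G₂` is also an extension of groupoids. -/
structure CrossedExt {X : Type} (A B : XMod X) extends Crossing A B where
  α₁_inj : ∀ {x : X} (a a' : A.H x), α₁ a = α₁ a' → a = a'
  β₂_surj : ∀ {x y : X} (g : B.G.Hom x y), ∃ m : M.Hom x y, β₂.map m = g
  exact₂ : ∀ {x : X} (m : M.Hom x x), β₂.map m = B.G.id x → ∃ a : A.H x, α₁ a = m

section SdpCrossing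

variable {X : Type} (A B : XMod X) (χ : XModHom A B)

/-- Arrows of the semidirect product groupoid `M = H₂ ⋊_χ G₁`. -/
def MHom (x y : X) : Type := B.H y × A.G.Hom x y

/-- Composition of `H₂ ⋊_χ G₁`: `(h,g)·(k,f) = (h·c_{χ(g)⁻¹}(k), g·f)`. -/
def mComp {x y z : X} (c : MHom A B y z) (d : MHom A B x y) : MHom A B x z :=
  (B.mul c.1 (B.act (B.G.inv (χ.mapG c.2)) d.1), A.G.comp c.2 d.2)

/-- `α₁(h₁) = (χ(h₁⁻¹), ∂₁ h₁)`. -/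
def mα₁ {x : X} (a : A.H x) : MHom A B x x := (χ.mapH (A.hinv a), A.δ a)

/-- `β₂(h₂, g₁) = ∂₂(h₂)·χ(g₁)`. -/
def mβ₂ {x y : X} (c : MHom A B x y) : B.G.Hom x y :=
  B.G.comp (B.δ c.1) (χ.mapG c.2)

end SdpCrossing


section Aux

namespace GpdOver
variable {X : Type} (G : GpdOver X)

theorem inv_comp_cancel_left {x y z : X} (g : G.Hom y z) (h : G.Hom x y) :
    G.comp (G.inv g) (G.comp g h) = h := by
  rw [← G.comp_assoc, G.inv_comp, G.id_comp]

theorem comp_inv_cancel_left {x y z : X} (g : G.Hom z y) (h : G.Hom x y) :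
    G.comp g (G.comp (G.inv g) h) = h := by
  rw [← G.comp_assoc, G.comp_inv, G.id_comp]

theorem inv_eq {x y : X} {g : G.Hom x y} {h : G.Hom y x} (e : G.comp h g = G.id x) :
    h = G.inv g := by
  have := congrArg (fun k => G.comp k (G.inv g)) e
  simpa [G.comp_assoc, G.comp_inv, G.comp_id, G.id_comp] using this

theorem inv_inv {x y : X} (g : G.Hom x y) : G.inv (G.inv g) = g :=
  (G.inv_eq (G.comp_inv g)).symm

end GpdOver

namespace XMod
variable {X : Type} (A : XMod X)

theorem inv_mul_cancel_left {x : X} (a b : A.H x) :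
    A.mul (A.hinv a) (A.mul a b) = b := by
  rw [← A.mul_assoc, A.inv_mul, A.one_mul]

theorem mul_inv_cancel_left {x : X} (a b : A.H x) :
    A.mul a (A.mul (A.hinv a) b) = b := by
  rw [← A.mul_assoc, A.mul_inv, A.one_mul]

theorem hinv_eq {x : X} {a b : A.H x} (e : A.mul b a = A.one x) : b = A.hinv a := by
  have := congrArg (fun c => A.mul c (A.hinv a)) e
  simpa [A.mul_assoc, A.mul_inv, A.mul_one, A.one_mul] using this

theorem hinv_hinv {x : X} (a : A.H x) : A.hinv (A.hinv a) = a :=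
  (A.hinv_eq (A.mul_inv a)).symm

theorem hinv_mul {x : X} (a b : A.H x) :
    A.hinv (A.mul a b) = A.mul (A.hinv b) (A.hinv a) := by
  refine (A.hinv_eq ?_).symm
  rw [A.mul_assoc, ← A.mul_assoc (A.hinv a) a b, A.inv_mul, A.one_mul, A.inv_mul]

theorem δ_hinv {x : X} (a : A.H x) : A.δ (A.hinv a) = A.G.inv (A.δ a) := by
  refine A.G.inv_eq ?_
  rw [← A.δ_mul, A.inv_mul, A.δ_one]

end XMod

namespace XModHom
variable {X : Type} {A B : XMod X} (χ : XModHom A B)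

theorem mapH_one (x : X) : χ.mapH (A.one x) = B.one x := by
  have h : B.mul (χ.mapH (A.one x)) (χ.mapH (A.one x)) = χ.mapH (A.one x) := by
    rw [← χ.mapH_mul, A.one_mul]
  have := congrArg (fun c => B.mul (B.hinv (χ.mapH (A.one x))) c) h
  simpa [B.inv_mul_cancel_left, B.inv_mul] using this

theorem mapH_hinv {x : X} (a : A.H x) : χ.mapH (A.hinv a) = B.hinv (χ.mapH a) := by
  refine B.hinv_eq ?_
  rw [← χ.mapH_mul, A.inv_mul, χ.mapH_one]

theorem mapG_inv {x y : X} (g : A.G.Hom x y) :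
    χ.mapG (A.G.inv g) = B.G.inv (χ.mapG g) := by
  refine B.G.inv_eq ?_
  rw [← χ.mapG_comp, A.G.inv_comp, χ.mapG_id]

end XModHom

end Aux

/-- Let `χ : 𝔊₁ → 𝔊₂` be a hypercover of crossed modules
of groupoids over a common object space `X`, i.e. the induced strict
homomorphism of associated 2-groupoids `H₁⋊G₁ ⇉ G₁ ⇉ X → H₂⋊G₂ ⇉ G₂ ⇉ X`
is a weak equivalence (hypotheses `hWE1`, `hWE2`, `hWE3`).  Then in the
associated crossing `M = H₂ ⋊_χ G₁`, the sequence `H₁ —α₁→ M —β₂→ G₂` is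
exact: `α₁(h₁) = (χ(h₁⁻¹), ∂₁ h₁)` is injective, and two elements of `M`
(with the same endpoints) have the same image under
`β₂(h₂,g₁) = ∂₂(h₂)·χ(g₁)` if and only if they differ by left
multiplication by an element of `α₁(H₁)`; moreover `β₂` is surjective.
Hence `M` is a crossed extension of `𝔊₁` and `𝔊₂`. -/
theorem hypercover_semidirect_crossed_extension {X : Type} (A B : XMod X)
    (χ : XModHom A B)
    -- (WE1) for the induced homomorphism of associated 2-groupoids
    (hWE1 : ∀ x : X, ∃ y : X, Nonempty (B.G.Hom x y))
    -- (WE2): every 1-arrow of the target is 2-isomorphic to the image of a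
    -- 1-arrow of the source
    (hWE2 : ∀ {x y : X} (γ : B.G.Hom x y),
      ∃ (g : A.G.Hom x y) (h : B.H y), B.G.comp (B.δ h) γ = χ.mapG g)
    -- (WE3): the square of 2-arrows is a pullback: the map
    -- `(h₁,g₁) ↦ (∂₁(h₁)g₁, (χ h₁, χ g₁), g₁)` is a bijection
    (hWE3 : ∀ {x y : X} (g g' : A.G.Hom x y) (h : B.H y),
      B.G.comp (B.δ h) (χ.mapG g) = χ.mapG g' →
      ∃! a : A.H y, A.G.comp (A.δ a) g = g' ∧ χ.mapH a = h) :
    -- α₁ is injective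
    (∀ {x : X} (a a' : A.H x), mα₁ A B χ a = mα₁ A B χ a' → a = a') ∧
    -- exactness of H₁ —α₁→ M —β₂→ G₂ in the middle
    (∀ {x y : X} (c c' : MHom A B x y),
        mβ₂ A B χ c = mβ₂ A B χ c' ↔
          ∃ a : A.H y, mComp A B χ (mα₁ A B χ a) c = c') ∧
    -- β₂ is surjective
    (∀ {x y : X} (γ : B.G.Hom x y), ∃ c : MHom A B x y, mβ₂ A B χ c = γ) := by
  refine ⟨?_, ?_, ?_⟩
  · -- injectivity of α₁
    intro x a a' h
    have h1 : χ.mapH (A.hinv a) = χ.mapH (A.hinv a') := congrArg Prod.fst h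
    have h2 : A.δ a = A.δ a' := congrArg Prod.snd h
    have hχ : χ.mapH a = χ.mapH a' := by
      have := congrArg B.hinv h1
      rwa [χ.mapH_hinv, χ.mapH_hinv, B.hinv_hinv, B.hinv_hinv] at this
    have hcond : B.G.comp (B.δ (χ.mapH a)) (χ.mapG (A.G.id x)) = χ.mapG (A.δ a) := by
      rw [χ.mapG_id, B.G.comp_id, χ.comm]
    obtain ⟨b, _, hu⟩ := hWE3 (A.G.id x) (A.δ a) (χ.mapH a) hcond
    have e1 : a = b := hu a ⟨by rw [A.G.comp_id], rfl⟩
    have e2 : a' = b := hu a' ⟨by rw [A.G.comp_id, h2], hχ.symm⟩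
    rw [e1, e2]
  · -- exactness in the middle
    intro x y c c'
    constructor
    · intro heq
      obtain ⟨h, g⟩ := c
      obtain ⟨h', g'⟩ := c'
      simp only [mβ₂] at heq
      have hcond : B.G.comp (B.δ (B.mul (B.hinv h') h)) (χ.mapG g) = χ.mapG g' := by
        rw [B.δ_mul, B.δ_hinv, B.G.comp_assoc, heq, ← B.G.comp_assoc, B.G.inv_comp,
          B.G.id_comp]
      obtain ⟨a, ⟨ha1, ha2⟩, _⟩ := hWE3 g g' (B.mul (B.hinv h') h) hcond
      refine ⟨a, ?_⟩
      simp only [mComp, mα₁]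
      refine Prod.ext ?_ ha1
      have hδ : χ.mapG (A.δ a) = B.δ (χ.mapH a) := (χ.comm a).symm
      rw [χ.mapH_hinv, ha2, hδ, ha2, ← B.δ_hinv, B.act_δ, B.hinv_hinv]
      simp [B.hinv_mul, B.hinv_hinv, B.mul_assoc, B.inv_mul_cancel_left,
        B.mul_inv_cancel_left, B.inv_mul, B.mul_inv, B.one_mul, B.mul_one]
    · rintro ⟨a, rfl⟩
      obtain ⟨h, g⟩ := c
      simp [mComp, mα₁, mβ₂, B.δ_mul, B.δ_act, χ.mapG_comp, χ.comm, χ.mapH_hinv,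
        A.δ_hinv, B.δ_hinv, χ.mapG_inv, B.G.inv_inv, B.G.comp_assoc,
        B.G.inv_comp_cancel_left, B.G.comp_inv_cancel_left]
  · -- surjectivity of β₂
    intro x y γ
    obtain ⟨g, h, hgh⟩ := hWE2 γ
    refine ⟨(B.hinv h, g), ?_⟩
    simp only [mβ₂]
    rw [← hgh, B.δ_hinv, ← B.G.comp_assoc, B.G.inv_comp, B.G.id_comp]
end

section
/- Let 𝔊₁ —M→ 𝔊₂ be a crossed extension of crossed modules of groupoids over common object space X (crossing data α₁, α₂, β₁, β₂ with both diagonals H₁ → M → G₂ and H₂ → M → G₁ exact extensions). For (m₁, m₂) ∈ M × M with β₂(m₁) = β₂(m₂), let ã₁(m₁,m₂) ∈ H₁ be the unique element with m₂ = α₁(ã₁(m₁,m₂)) m₁. Then for composable pairs, ã₁(m₁m₁', m₂m₂') = ã₁(m₁,m₂) · c₁(α₂(m₁)⁻¹)(ã₁(m₁',m₂')), and the map Φ₁: [m₁,m₂] ↦ [ã₁(m₁,m₂), m₁] is a groupoid isomorphism from the diamond product M ◇_{𝔊₂} M̄ to the crossed semidirect product H₁ ⋊_{H₂} M, with inverse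 Ψ₁: [h₁, m] ↦ [m, α₁(h₁)m]. -/
section MMbar

variable {X : Type} {A B : XMod X} (E : CrossedExt A B)

/-- Pairs `(m₁, m₂) ∈ M × M` with `β₂(m₁) = β₂(m₂)`. -/
def MMPair (x y : X) : Type :=
  {p : E.M.Hom x y × E.M.Hom x y // E.β₂.map p.1 = E.β₂.map p.2}

/-- Arrows of the diamond product `M ◇_{𝔊₂} M̄`: the quotient of `MMPair`
by `(β₁(h₂)m₁, β₁(h₂)m₂) ∼ (m₁, m₂)`. -/
def MMQ (x y : X) : Type :=
  Quot (fun p q : MMPair E x y => ∃ h : B.H y,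
    p.1.1 = E.M.comp (E.β₁ h) q.1.1 ∧ p.1.2 = E.M.comp (E.β₁ h) q.1.2)

/-- The class of a pair in `M ◇_{𝔊₂} M̄`. -/
def mmk {x y : X} (p : MMPair E x y) : MMQ E x y := Quot.mk _ p

/-- Pairs `(h₁, m)` of the semidirect product `H₁ ⋊ M`. -/
def HMPair (x y : X) : Type := A.H y × E.M.Hom x y

/-- Arrows of the crossed semidirect product `H₁ ⋊_{H₂} M`: the quotient of
`HMPair` by `h₂·(h₁, m) = (h₁, β₁(h₂)·m)`. -/
def HMQ (x y : X) : Type :=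
  Quot (fun p q : HMPair E x y =>
    p.1 = q.1 ∧ ∃ h : B.H y, p.2 = E.M.comp (E.β₁ h) q.2)

/-- The class of a pair in `H₁ ⋊_{H₂} M`. -/
def hmk {x y : X} (p : HMPair E x y) : HMQ E x y := Quot.mk _ p

end MMbar

section AuxLemmas

theorem GpdOver.cancel_right {X : Type} (M : GpdOver X) {x y z : X}
    {a b : M.Hom y z} (m : M.Hom x y) (h : M.comp a m = M.comp b m) : a = b := by
  have := congrArg (fun g => M.comp g (M.inv m)) h
  simpa [M.comp_assoc, M.comp_inv, M.comp_id] using this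

theorem GpdOver.inv_inv_s18 {X : Type} (M : GpdOver X) {x y : X} (g : M.Hom x y) :
    M.inv (M.inv g) = g := by
  apply M.cancel_right (M.inv g)
  rw [M.inv_comp, M.comp_inv]

variable {X : Type} {A B : XMod X} (E : CrossedExt A B)

theorem CrossedExt.β₁_one (y : X) : E.β₁ (B.one y) = E.M.id y := by
  have h : E.M.comp (E.β₁ (B.one y)) (E.M.id y)
      = E.M.comp (E.β₁ (B.one y)) (E.β₁ (B.one y)) := by
    rw [E.M.comp_id, ← E.β₁_mul, B.one_mul]
  have := congrArg (fun g => E.M.comp (E.M.inv (E.β₁ (B.one y))) g) h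
  simpa [← E.M.comp_assoc, E.M.inv_comp, E.M.id_comp, E.M.comp_id] using this.symm

/-- `β₁ h` commutes with `α₁ a`. -/
theorem CrossedExt.commαβ {y : X} (h : B.H y) (a : A.H y) :
    E.M.comp (E.β₁ h) (E.α₁ a) = E.M.comp (E.α₁ a) (E.β₁ h) := by
  have := E.conj₁ (E.β₁ h) a
  rw [E.diag₂, A.act_id] at this
  have := congrArg (fun g => E.M.comp (E.β₁ h) g) this
  simp only [← E.M.comp_assoc, E.M.comp_inv, E.M.id_comp] at this
  exact this

theorem CrossedExt.pullα {x y : X} (m : E.M.Hom x y) (a : A.H x) :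
    E.M.comp m (E.α₁ a)
      = E.M.comp (E.α₁ (A.act (A.G.inv (E.α₂.map m)) a)) m := by
  have := E.conj₁ (E.M.inv m) a
  rw [E.α₂.map_inv, E.M.inv_inv_s18] at this
  have := congrArg (fun g => E.M.comp g m) this
  simpa [E.M.comp_assoc, E.M.inv_comp, E.M.comp_id] using this.symm

theorem CrossedExt.pullβ {x y : X} (m : E.M.Hom x y) (h : B.H x) :
    E.M.comp m (E.β₁ h)
      = E.M.comp (E.β₁ (B.act (B.G.inv (E.β₂.map m)) h)) m := by
  have := E.conj₂ (E.M.inv m) h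
  rw [E.β₂.map_inv, E.M.inv_inv_s18] at this
  have := congrArg (fun g => E.M.comp g m) this
  simpa [E.M.comp_assoc, E.M.inv_comp, E.M.comp_id] using this.symm

theorem CrossedExt.ta_unique
    (ta : ∀ {x y : X}, E.M.Hom x y → E.M.Hom x y → A.H y)
    (hta : ∀ {x y : X} (m m' : E.M.Hom x y),
      E.β₂.map m = E.β₂.map m' → m' = E.M.comp (E.α₁ (ta m m')) m)
    {x y : X} {m m' : E.M.Hom x y} {a : A.H y}
    (hb : E.β₂.map m = E.β₂.map m')
    (ha : m' = E.M.comp (E.α₁ a) m) : ta m m' = a := by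
  apply E.α₁_inj
  apply E.M.cancel_right m
  rw [← hta m m' hb, ← ha]

end AuxLemmas

section MainDefs

variable {X : Type} {A B : XMod X} (E : CrossedExt A B)
  (ta : ∀ {x y : X}, E.M.Hom x y → E.M.Hom x y → A.H y)
  (hta : ∀ {x y : X} (m m' : E.M.Hom x y),
    E.β₂.map m = E.β₂.map m' → m' = E.M.comp (E.α₁ (ta m m')) m)

include hta in
theorem CrossedExt.ta_wd {x y : X} (p q : MMPair E x y)
    (hr : ∃ h : B.H y, p.1.1 = E.M.comp (E.β₁ h) q.1.1 ∧
      p.1.2 = E.M.comp (E.β₁ h) q.1.2) :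
    ta p.1.1 p.1.2 = ta q.1.1 q.1.2 := by
  obtain ⟨h, h1, h2⟩ := hr
  apply E.ta_unique ta hta p.2
  calc p.1.2 = E.M.comp (E.β₁ h) q.1.2 := h2
    _ = E.M.comp (E.M.comp (E.β₁ h) (E.α₁ (ta q.1.1 q.1.2))) q.1.1 := by
        rw [E.M.comp_assoc, ← hta q.1.1 q.1.2 q.2]
    _ = E.M.comp (E.α₁ (ta q.1.1 q.1.2)) (E.M.comp (E.β₁ h) q.1.1) := by
        rw [E.commαβ, E.M.comp_assoc]
    _ = E.M.comp (E.α₁ (ta q.1.1 q.1.2)) p.1.1 := by rw [← h1]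

def CrossedExt.Phi {x y : X} : MMQ E x y → HMQ E x y :=
  Quot.lift (fun p => hmk E (ta p.1.1 p.1.2, p.1.1)) (by
    rintro p q ⟨h, h1, h2⟩
    apply Quot.sound
    exact ⟨E.ta_wd ta hta p q ⟨h, h1, h2⟩, h, h1⟩)

def CrossedExt.Psi {x y : X} : HMQ E x y → MMQ E x y :=
  Quot.lift (fun q => mmk E ⟨(q.2, E.M.comp (E.α₁ q.1) q.2), by
      rw [E.β₂.map_comp, E.diag₁, B.G.id_comp]⟩) (by
    rintro p q ⟨h1, h, h2⟩
    apply Quot.sound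
    refine ⟨h, h2, ?_⟩
    calc E.M.comp (E.α₁ p.1) p.2
        = E.M.comp (E.M.comp (E.α₁ q.1) (E.β₁ h)) q.2 := by
          rw [h1, h2, E.M.comp_assoc]
      _ = E.M.comp (E.β₁ h) (E.M.comp (E.α₁ q.1) q.2) := by
          rw [← E.commαβ, E.M.comp_assoc])

def CrossedExt.dcomp {x y z : X} : MMQ E y z → MMQ E x y → MMQ E x z :=
  fun c d =>
  Quot.lift (fun p =>
    Quot.lift (fun q => mmk E ⟨(E.M.comp p.1.1 q.1.1, E.M.comp p.1.2 q.1.2), by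
        rw [E.β₂.map_comp, E.β₂.map_comp, p.2, q.2]⟩)
      (by
        rintro q q' ⟨h, h1, h2⟩
        apply Quot.sound
        refine ⟨B.act (B.G.inv (E.β₂.map p.1.1)) h, ?_, ?_⟩
        · calc E.M.comp p.1.1 q.1.1
              = E.M.comp (E.M.comp p.1.1 (E.β₁ h)) q'.1.1 := by
                rw [h1, E.M.comp_assoc]
            _ = E.M.comp (E.β₁ (B.act (B.G.inv (E.β₂.map p.1.1)) h))
                  (E.M.comp p.1.1 q'.1.1) := by rw [E.pullβ, E.M.comp_assoc]
        · calc E.M.comp p.1.2 q.1.2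
              = E.M.comp (E.M.comp p.1.2 (E.β₁ h)) q'.1.2 := by
                rw [h2, E.M.comp_assoc]
            _ = E.M.comp (E.β₁ (B.act (B.G.inv (E.β₂.map p.1.1)) h))
                  (E.M.comp p.1.2 q'.1.2) := by rw [E.pullβ, E.M.comp_assoc, p.2]) d)
    (by
      rintro p p' ⟨h, h1, h2⟩
      induction d using Quot.inductionOn with
      | h q =>
        apply Quot.sound
        refine ⟨h, ?_, ?_⟩
        · show E.M.comp p.1.1 q.1.1
            = E.M.comp (E.β₁ h) (E.M.comp p'.1.1 q.1.1)
          rw [h1, E.M.comp_assoc]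
        · show E.M.comp p.1.2 q.1.2
            = E.M.comp (E.β₁ h) (E.M.comp p'.1.2 q.1.2)
          rw [h2, E.M.comp_assoc]) c

def CrossedExt.scomp {x y z : X} : HMQ E y z → HMQ E x y → HMQ E x z :=
  fun c d =>
  Quot.lift (fun p =>
    Quot.lift (fun q => hmk E (A.mul p.1 (A.act (A.G.inv (E.α₂.map p.2)) q.1),
        E.M.comp p.2 q.2))
      (by
        rintro q q' ⟨h1, h, h2⟩
        apply Quot.sound
        refine ⟨by rw [h1], B.act (B.G.inv (E.β₂.map p.2)) h, ?_⟩
        calc E.M.comp p.2 q.2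
            = E.M.comp (E.M.comp p.2 (E.β₁ h)) q'.2 := by rw [h2, E.M.comp_assoc]
          _ = E.M.comp (E.β₁ (B.act (B.G.inv (E.β₂.map p.2)) h))
                (E.M.comp p.2 q'.2) := by rw [E.pullβ, E.M.comp_assoc]) d)
    (by
      rintro p p' ⟨h1, h, h2⟩
      induction d using Quot.inductionOn with
      | h q =>
        apply Quot.sound
        refine ⟨?_, h, ?_⟩
        · show A.mul p.1 (A.act (A.G.inv (E.α₂.map p.2)) q.1)
            = A.mul p'.1 (A.act (A.G.inv (E.α₂.map p'.2)) q.1)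
          rw [h1, h2, E.α₂.map_comp, E.diag₂, A.G.id_comp]
        · show E.M.comp p.2 q.2 = E.M.comp (E.β₁ h) (E.M.comp p'.2 q.2)
          rw [h2, E.M.comp_assoc]) c

end MainDefs

/-- Let `M` be a crossed extension of `𝔊₁` and `𝔊₂` over
`X`, and for `(m₁, m₂)` with `β₂(m₁) = β₂(m₂)` let `ã₁(m₁, m₂) ∈ H₁` be
the unique element with `m₂ = α₁(ã₁(m₁,m₂))·m₁` (hypothesis `hta`).  Then
`ã₁` satisfies the cocycle identity
`ã₁(m₁m₁', m₂m₂') = ã₁(m₁,m₂) · c₁(α₂(m₁)⁻¹)(ã₁(m₁',m₂'))`, and the map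
`Φ₁ : [m₁,m₂] ↦ [ã₁(m₁,m₂), m₁]` is a groupoid isomorphism from the
diamond product `M ◇_{𝔊₂} M̄` to the crossed semidirect product
`H₁ ⋊_{H₂} M`, with inverse `Ψ₁ : [h₁, m] ↦ [m, α₁(h₁)·m]`. -/
theorem diamond_selfproduct_iso_crossed_semidirect {X : Type}
    (A B : XMod X) (E : CrossedExt A B)
    (ta : ∀ {x y : X}, E.M.Hom x y → E.M.Hom x y → A.H y)
    (hta : ∀ {x y : X} (m m' : E.M.Hom x y),
      E.β₂.map m = E.β₂.map m' → m' = E.M.comp (E.α₁ (ta m m')) m) :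
    -- the cocycle identity
    (∀ {x y z : X} (m₁ m₂ : E.M.Hom y z) (m₁' m₂' : E.M.Hom x y),
        E.β₂.map m₁ = E.β₂.map m₂ → E.β₂.map m₁' = E.β₂.map m₂' →
        ta (E.M.comp m₁ m₁') (E.M.comp m₂ m₂')
          = A.mul (ta m₁ m₂)
              (A.act (A.G.inv (E.α₂.map m₁)) (ta m₁' m₂'))) ∧
    -- the isomorphism Φ₁ with inverse Ψ₁
    (∃ (Φ : ∀ {x y : X}, MMQ E x y → HMQ E x y)
       (Ψ : ∀ {x y : X}, HMQ E x y → MMQ E x y)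
       (dcomp : ∀ {x y z : X}, MMQ E y z → MMQ E x y → MMQ E x z)
       (scomp : ∀ {x y z : X}, HMQ E y z → HMQ E x y → HMQ E x z),
      (∀ {x y : X} (p : MMPair E x y),
          Φ (mmk E p) = hmk E (ta p.1.1 p.1.2, p.1.1)) ∧
      (∀ {x y : X} (q : HMPair E x y),
          Ψ (hmk E q) = mmk E ⟨(q.2, E.M.comp (E.α₁ q.1) q.2), by
            rw [E.β₂.map_comp, E.diag₁, B.G.id_comp]⟩) ∧
      (∀ {x y : X} (c : MMQ E x y), Ψ (Φ c) = c) ∧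
      (∀ {x y : X} (c : HMQ E x y), Φ (Ψ c) = c) ∧
      -- the groupoid structures, componentwise
      (∀ {x y z : X} (p : MMPair E y z) (q : MMPair E x y),
          dcomp (mmk E p) (mmk E q)
            = mmk E ⟨(E.M.comp p.1.1 q.1.1, E.M.comp p.1.2 q.1.2), by
                rw [E.β₂.map_comp, E.β₂.map_comp, p.2, q.2]⟩) ∧
      (∀ {x y z : X} (p : HMPair E y z) (q : HMPair E x y),
          scomp (hmk E p) (hmk E q)
            = hmk E (A.mul p.1 (A.act (A.G.inv (E.α₂.map p.2)) q.1),
                E.M.comp p.2 q.2)) ∧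
      -- Φ is a morphism of groupoids
      (∀ {x y z : X} (c : MMQ E y z) (d : MMQ E x y),
          Φ (dcomp c d) = scomp (Φ c) (Φ d))) := by
  have cocycle : ∀ {x y z : X} (m₁ m₂ : E.M.Hom y z) (m₁' m₂' : E.M.Hom x y),
      E.β₂.map m₁ = E.β₂.map m₂ → E.β₂.map m₁' = E.β₂.map m₂' →
      ta (E.M.comp m₁ m₁') (E.M.comp m₂ m₂')
        = A.mul (ta m₁ m₂) (A.act (A.G.inv (E.α₂.map m₁)) (ta m₁' m₂')) := by
    intro x y z m₁ m₂ m₁' m₂' h1 h2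
    apply E.ta_unique ta hta
    · rw [E.β₂.map_comp, E.β₂.map_comp, h1, h2]
    · calc E.M.comp m₂ m₂'
          = E.M.comp (E.M.comp (E.α₁ (ta m₁ m₂)) m₁)
              (E.M.comp (E.α₁ (ta m₁' m₂')) m₁') := by
            rw [← hta m₁ m₂ h1, ← hta m₁' m₂' h2]
        _ = E.M.comp (E.α₁ (ta m₁ m₂))
              (E.M.comp (E.M.comp m₁ (E.α₁ (ta m₁' m₂'))) m₁') := by
            rw [E.M.comp_assoc, E.M.comp_assoc]
        _ = E.M.comp (E.α₁ (ta m₁ m₂))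
              (E.M.comp (E.M.comp
                (E.α₁ (A.act (A.G.inv (E.α₂.map m₁)) (ta m₁' m₂'))) m₁) m₁') := by
            rw [E.pullα]
        _ = E.M.comp
              (E.α₁ (A.mul (ta m₁ m₂) (A.act (A.G.inv (E.α₂.map m₁)) (ta m₁' m₂'))))
              (E.M.comp m₁ m₁') := by
            rw [E.α₁_mul, E.M.comp_assoc, E.M.comp_assoc]
  refine ⟨cocycle, CrossedExt.Phi E ta hta, CrossedExt.Psi E,
    CrossedExt.dcomp E, CrossedExt.scomp E,
    fun {x y} p => rfl, fun {x y} q => rfl, ?_, ?_,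
    fun {x y z} p q => rfl, fun {x y z} p q => rfl, ?_⟩
  · intro x y c
    induction c using Quot.inductionOn with
    | h p =>
      apply Quot.sound
      refine ⟨B.one y, ?_, ?_⟩
      · show p.1.1 = E.M.comp (E.β₁ (B.one y)) p.1.1
        rw [E.β₁_one, E.M.id_comp]
      · show E.M.comp (E.α₁ (ta p.1.1 p.1.2)) p.1.1
          = E.M.comp (E.β₁ (B.one y)) p.1.2
        rw [E.β₁_one, E.M.id_comp, ← hta p.1.1 p.1.2 p.2]
  · intro x y c
    induction c using Quot.inductionOn with
    | h q =>
      have h : ta q.2 (E.M.comp (E.α₁ q.1) q.2) = q.1 :=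
        E.ta_unique ta hta (by rw [E.β₂.map_comp, E.diag₁, B.G.id_comp]) rfl
      show hmk E (ta q.2 (E.M.comp (E.α₁ q.1) q.2), q.2) = hmk E q
      rw [h]
      rfl
  · intro x y z c d
    induction c using Quot.inductionOn with
    | h p =>
      induction d using Quot.inductionOn with
      | h q =>
        show hmk E (ta (E.M.comp p.1.1 q.1.1) (E.M.comp p.1.2 q.1.2),
            E.M.comp p.1.1 q.1.1)
          = hmk E (A.mul (ta p.1.1 p.1.2)
              (A.act (A.G.inv (E.α₂.map p.1.1)) (ta q.1.1 q.1.2)),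
            E.M.comp p.1.1 q.1.1)
        rw [cocycle p.1.1 p.1.2 q.1.1 q.1.2 p.2 q.2]
end
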